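/- Completeness of the range-restricting transformation rr: for every clause set M, if rr(M) is satisfiable then M is satisfiable. -/

import Mathlib

namespace BUMG

/-- First-order terms over function symbols `F`, with variables indexed by `ℕ`. -/
inductive Term (F : Type) : Type where
  | var : ℕ → Term F
  | app : F → List (Term F) → Term F

namespace Term
variable {F : Type}

/-- The list of variables occurring in a term. -/
def vars : Term F → List ℕ
  | var n => [n]
  | app _ ts => ts.attach.flatMap (fun t => vars t.1)
decreasing_by simp_wf; have := List.sizeOf_lt_of_mem t.2; omega

/-- The function symbols (with the arity of the occurrence) occurring in a term. -/
def funcs : Term F → List (F × ℕ)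
  | var _ => []
  | app f ts => (f, ts.length) :: ts.attach.flatMap (fun t => funcs t.1)
decreasing_by simp_wf; have := List.sizeOf_lt_of_mem t.2; omega

/-- Applying a substitution to a term. -/
def subst (g : ℕ → Term F) : Term F → Term F
  | var n => g n
  | app f ts => app f (ts.attach.map (fun t => subst g t.1))
decreasing_by simp_wf; have := List.sizeOf_lt_of_mem t.2; omega

/-- The number of occurrences of symbols (variables and function symbols) in a term. -/
def size : Term F → ℕ
  | var _ => 1
  | app _ ts => 1 + (ts.attach.map (fun t => size t.1)).sum
decreasing_by simp_wf; have := List.sizeOf_lt_of_mem t.2; omega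

/-- A term is ground iff it contains no variables. -/
def IsGround (t : Term F) : Prop := t.vars = []

def isVar : Term F → Bool
  | var _ => true
  | app _ _ => false

/-- A proper functional term is a term that is neither a variable nor a constant. -/
def isPF : Term F → Bool
  | app _ (_ :: _) => true
  | _ => false

/-- The subterm relation. -/
inductive Subterm : Term F → Term F → Prop
  | refl (t : Term F) : Subterm t t
  | app {s t : Term F} {f : F} {ts : List (Term F)} :
      t ∈ ts → Subterm s t → Subterm s (app f ts)

end Term

/-- Atoms over predicate symbols `P` and function symbols `F`. -/
structure Atom (P F : Type) where
  pred : P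
  args : List (Term F)

namespace Atom
variable {P F : Type}

def subst (g : ℕ → Term F) (a : Atom P F) : Atom P F := ⟨a.pred, a.args.map (Term.subst g)⟩
def vars (a : Atom P F) : List ℕ := a.args.flatMap Term.vars
def IsGround (a : Atom P F) : Prop := a.vars = []
def funcs (a : Atom P F) : List (F × ℕ) := a.args.flatMap Term.funcs
/-- Whether the atom contains a proper functional term. -/
def hasPF (a : Atom P F) : Bool := a.args.any Term.isPF
def size (a : Atom P F) : ℕ := 1 + (a.args.map Term.size).sum

end Atom

/-- A clause `H₁ ∨ ... ∨ Hₘ ← B₁ ∧ ... ∧ Bₖ` with head atoms `heads`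
and body atoms `body`. -/
structure Clause (P F : Type) where
  heads : List (Atom P F)
  body : List (Atom P F)

namespace Clause
variable {P F : Type}

def atoms (C : Clause P F) : List (Atom P F) := C.heads ++ C.body
def vars (C : Clause P F) : List ℕ := C.atoms.flatMap Atom.vars
def bodyVars (C : Clause P F) : List ℕ := C.body.flatMap Atom.vars
def headVars (C : Clause P F) : List ℕ := C.heads.flatMap Atom.vars
def maxVar (C : Clause P F) : ℕ := C.vars.foldr max 0
def subst (g : ℕ → Term F) (C : Clause P F) : Clause P F :=
  ⟨C.heads.map (Atom.subst g), C.body.map (Atom.subst g)⟩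
/-- The predicate symbols (with the arity of the occurrence) occurring in a clause. -/
def preds (C : Clause P F) : List (P × ℕ) := C.atoms.map (fun a => (a.pred, a.args.length))
/-- The function symbols (with the arity of the occurrence) occurring in a clause. -/
def funcs (C : Clause P F) : List (F × ℕ) := C.atoms.flatMap Atom.funcs
/-- The number of occurrences of symbols in a clause. -/
def size (C : Clause P F) : ℕ := (C.atoms.map Atom.size).sum

/-- A clause is range-restricted iff every variable occurring in it occurs in its body. -/
def RangeRestricted (C : Clause P F) : Prop := ∀ v ∈ C.vars, v ∈ C.bodyVars

/-- A Bernays–Schönfinkel clause: every functional term occurring in it is a constant. -/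
def BS (C : Clause P F) : Prop := ∀ fn ∈ C.funcs, fn.2 = 0

end Clause

/-- A clause set is range-restricted iff all its clauses are. -/
def RangeRestrictedSet {P F : Type} (M : Set (Clause P F)) : Prop :=
  ∀ C ∈ M, C.RangeRestricted

/-- The predicate symbols (with arities) occurring in a clause set. -/
def predsOf {P F : Type} (M : Set (Clause P F)) : Set (P × ℕ) :=
  { pn | ∃ C ∈ M, pn ∈ C.preds }

/-- The function symbols (with arities) occurring in a clause set. -/
def funcsOf {P F : Type} (M : Set (Clause P F)) : Set (F × ℕ) :=
  { fn | ∃ C ∈ M, fn ∈ C.funcs }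

/-- A signature: a set of predicate symbols with arities and
a set of function symbols with arities. -/
structure Sig (P F : Type) where
  preds : Set (P × ℕ)
  funcs : Set (F × ℕ)

/-- The clause set `M` is well-formed over the signature `σ`: all symbols occurring in `M`
belong to `σ` (with matching arities). -/
def WFSet {P F : Type} (σ : Sig P F) (M : Set (Clause P F)) : Prop :=
  ∀ C ∈ M, (∀ pn ∈ C.preds, pn ∈ σ.preds) ∧ (∀ fn ∈ C.funcs, fn ∈ σ.funcs)

/-- The total number of occurrences of symbols in a clause set. -/
noncomputable def setSize {P F : Type} (M : Set (Clause P F)) : ℕ :=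
  ∑ᶠ C ∈ M, C.size

/-! ### Herbrand semantics -/

/-- A substitution is ground iff it maps every variable to a ground term. -/
def GroundSubst {F : Type} (g : ℕ → Term F) : Prop := ∀ n, (g n).IsGround

/-- A (Herbrand) interpretation `I` (a set of ground atoms) satisfies a clause iff
it satisfies every ground instance of it. -/
def satClause {P F : Type} (I : Set (Atom P F)) (C : Clause P F) : Prop :=
  ∀ g : ℕ → Term F, GroundSubst g →
    (∀ a ∈ C.body, a.subst g ∈ I) → ∃ a ∈ C.heads, a.subst g ∈ I

/-- A clause set is satisfiable iff some Herbrand interpretation (a set of ground atoms)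
satisfies every ground instance of every clause of it. -/
def Satisfiable {P F : Type} (M : Set (Clause P F)) : Prop :=
  ∃ I : Set (Atom P F), (∀ a ∈ I, a.IsGround) ∧ ∀ C ∈ M, satClause I C

/-! ### Equality axioms and E-satisfiability -/

/-- The equality atom `s ≈ t` (`eqP` being the distinguished equality predicate `≈`). -/
def eqAtom {P F : Type} (eqP : P) (s t : Term F) : Atom P F := ⟨eqP, [s, t]⟩

def rangeVars {F : Type} (n : ℕ) : List (Term F) := (List.range n).map Term.var

def xsList {F : Type} (n : ℕ) : List (Term F) := (List.range n).map (fun i => Term.var (2*i))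
def ysList {F : Type} (n : ℕ) : List (Term F) := (List.range n).map (fun i => Term.var (2*i+1))
def eqConjList {P F : Type} (eqP : P) (n : ℕ) : List (Atom P F) :=
  (List.range n).map (fun i => eqAtom eqP (Term.var (2*i)) (Term.var (2*i+1)))

/-- The equality axioms `EAX`: `≈` is reflexive, symmetric, transitive and compatible with
the given function and predicate symbols. -/
def EAX {P F : Type} (eqP : P) (Ps : Set (P × ℕ)) (Fs : Set (F × ℕ)) : Set (Clause P F) :=
  { ⟨[eqAtom eqP (Term.var 0) (Term.var 0)], []⟩,
    ⟨[eqAtom eqP (Term.var 1) (Term.var 0)], [eqAtom eqP (Term.var 0) (Term.var 1)]⟩,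
    ⟨[eqAtom eqP (Term.var 0) (Term.var 2)],
      [eqAtom eqP (Term.var 0) (Term.var 1), eqAtom eqP (Term.var 1) (Term.var 2)]⟩ } ∪
  { D | ∃ fn ∈ Fs,
      D = ⟨[eqAtom eqP (Term.app fn.1 (xsList fn.2)) (Term.app fn.1 (ysList fn.2))],
           eqConjList eqP fn.2⟩ } ∪
  { D | ∃ pn ∈ Ps,
      D = ⟨[⟨pn.1, ysList pn.2⟩], ⟨pn.1, xsList pn.2⟩ :: eqConjList eqP pn.2⟩ }

/-- A clause set `M` is E-satisfiable iff `M` together with the equality axioms for the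
symbols occurring in `M` is satisfiable. -/
def ESatisfiable {P F : Type} (eqP : P) (M : Set (Clause P F)) : Prop :=
  Satisfiable (M ∪ EAX eqP (predsOf M) (funcsOf M))

/-! ### Range-restricting transformations -/

/-- The atom `dom(t)`. -/
def domAtom {P F : Type} (domP : P) (t : Term F) : Atom P F := ⟨domP, [t]⟩

/-- The term `c` for a constant `c`. -/
def cTerm {F : Type} (c : F) : Term F := Term.app c []

/-- The clause `dom(c) ← ⊤`. -/
def domcClause {P F : Type} (domP : P) (c : F) : Clause P F :=
  ⟨[domAtom domP (cTerm c)], []⟩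

/-- Range-restricting a clause (Step (2) of `crr`, Step (3) of `rr`):
`H ← B` becomes `H ← B ∧ dom(x₁) ∧ ... ∧ dom(xₖ)` where `x₁,...,xₖ` are the variables
occurring in the head but not in the body. -/
def rangeRestrictClause {P F : Type} (domP : P) (C : Clause P F) : Clause P F :=
  ⟨C.heads, C.body ++
    ((C.headVars.filter (fun v => v ∉ C.bodyVars)).dedup).map
      (fun v => domAtom domP (Term.var v))⟩

/-- The argument list of the term abstraction of an atom: argument positions holding
non-variable terms are replaced by fresh variables. -/
def abstrArgs {F : Type} (base : ℕ) (ts : List (Term F)) : List (Term F) :=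
  ts.mapIdx (fun i t => if t.isVar then t else Term.var (base + i))

/-- Step (2) of the `rr` transformation: for each clause `H ← B` of `M`, each body atom
`P(t₁,...,tₙ)` of `B` with term abstraction `P(s₁,...,sₙ)` and abstraction substitution `α`,
the clauses `dom(xᵢ)α ← P(s₁,...,sₙ)` for every `xᵢ` in the domain of `α`. -/
def step2Set {P F : Type} (domP : P) (M : Set (Clause P F)) : Set (Clause P F) :=
  { D | ∃ C ∈ M, ∃ a ∈ C.body, ∃ i : Fin a.args.length,
        (a.args.get i).isVar = false ∧
        D = ⟨[domAtom domP (a.args.get i)],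
             [⟨a.pred, abstrArgs (C.maxVar + 1) a.args⟩]⟩ }

/-- Step (4) of the `rr` transformation: the clauses `dom(xᵢ) ← P(x₁,...,xₙ)` for every
`n`-ary predicate symbol `P` of the signature and every `1 ≤ i ≤ n`. -/
def step4Set {P F : Type} (domP : P) (Ps : Set (P × ℕ)) : Set (Clause P F) :=
  { D | ∃ pn ∈ Ps, ∃ i, i < pn.2 ∧
        D = ⟨[domAtom domP (Term.var i)], [⟨pn.1, rangeVars pn.2⟩]⟩ }

/-- Step (5) of the `rr` transformation: the clauses `dom(xᵢ) ← dom(f(x₁,...,xₙ))` for every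
`n`-ary function symbol `f` of the signature and every `1 ≤ i ≤ n`. -/
def step5Set {P F : Type} (domP : P) (Fs : Set (F × ℕ)) : Set (Clause P F) :=
  { D | ∃ fn ∈ Fs, ∃ i, i < fn.2 ∧
        D = ⟨[domAtom domP (Term.var i)],
             [domAtom domP (Term.app fn.1 (rangeVars fn.2))]⟩ }

/-- The new range-restricting transformation `rr` (over the signature `σ`, with fresh unary
predicate symbol `dom` and constant `c`): the clauses of `M`, the clause `dom(c) ← ⊤` and
the Step-(2) clauses, all range-restricted by Step (3), together with the Step-(4) and
Step-(5) clauses. -/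
def rr {P F : Type} [DecidableEq P] [DecidableEq F] (σ : Sig P F) (domP : P) (c : F)
    (M : Set (Clause P F)) : Set (Clause P F) :=
  (rangeRestrictClause domP '' (M ∪ {domcClause domP c} ∪ step2Set domP M))
  ∪ step4Set domP σ.preds ∪ step5Set domP σ.funcs

/-- Step (3) of the classical transformation `crr`: the clauses
`dom(f(x₁,...,xₙ)) ← dom(x₁) ∧ ... ∧ dom(xₙ)` enumerating the Herbrand universe. -/
def crrStep3 {P F : Type} (domP : P) (Fs : Set (F × ℕ)) : Set (Clause P F) :=
  { D | ∃ fn ∈ Fs,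
        D = ⟨[domAtom domP (Term.app fn.1 (rangeVars fn.2))],
             (List.range fn.2).map (fun i => domAtom domP (Term.var i))⟩ }

/-- The classical range-restricting transformation `crr`. -/
def crr {P F : Type} [DecidableEq P] [DecidableEq F] (σ : Sig P F) (domP : P) (c : F)
    (M : Set (Clause P F)) : Set (Clause P F) :=
  (rangeRestrictClause domP '' (M ∪ {domcClause domP c})) ∪ crrStep3 domP σ.funcs

/-! ### Shifting -/

/-- Partial flattening of the arguments of a non-equational body atom: top-level proper
functional terms are replaced by fresh variables. The `j`-th body atom uses the fresh
variables `base + Nat.pair j i`. -/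
def pfArgs {P F : Type} [DecidableEq P] (eqP : P) (base j : ℕ) (a : Atom P F) : Atom P F :=
  if a.pred = eqP then a
  else ⟨a.pred, a.args.mapIdx (fun i t => if t.isPF then Term.var (base + Nat.pair j i) else t)⟩

/-- The equations `tᵢ ≈ xᵢ` introduced by partially flattening a body atom. -/
def pfEqs {P F : Type} [DecidableEq P] (eqP : P) (base j : ℕ) (a : Atom P F) :
    List (Atom P F) :=
  if a.pred = eqP then []
  else (a.args.mapIdx (fun i t => (i, t))).filterMap
        (fun p => if p.2.isPF then
            some (eqAtom eqP p.2 (Term.var (base + Nat.pair j p.1))) else none)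

/-- Partial flattening of a clause. -/
def pfClause {P F : Type} [DecidableEq P] (eqP : P) (C : Clause P F) : Clause P F :=
  ⟨C.heads,
   C.body.mapIdx (fun j a => pfArgs eqP (C.maxVar + 1) j a) ++
   (C.body.mapIdx (fun j a => pfEqs eqP (C.maxVar + 1) j a)).flatten⟩

/-- The reflexivity unit clause `x ≈ x ← ⊤`. -/
def reflClause {P F : Type} (eqP : P) : Clause P F :=
  ⟨[eqAtom eqP (Term.var 0) (Term.var 0)], []⟩

/-- The partial flattening transformation `pf`. -/
def pf {P F : Type} [DecidableEq P] (eqP : P) (M : Set (Clause P F)) : Set (Clause P F) :=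
  pfClause eqP '' M ∪ {reflClause eqP}

/-- The atom `P̄(t₁,...,tₙ)` for the atom `P(t₁,...,tₙ)`, where `bar` maps each predicate
symbol `P` to the fresh predicate symbol `P̄` uniquely associated with it. -/
def barAtom {P F : Type} (bar : P → P) (a : Atom P F) : Atom P F := ⟨bar a.pred, a.args⟩

/-- Basic shifting of a clause: the body atoms containing a proper functional term are
moved, negated (via `bar`), into the head. -/
def bsClause {P F : Type} (bar : P → P) (C : Clause P F) : Clause P F :=
  ⟨C.heads ++ (C.body.filter (fun a => a.hasPF)).map (barAtom bar),
   C.body.filter (fun a => !a.hasPF)⟩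

/-- The predicate symbols (with arities) of shifted atoms of `M`. -/
def shiftedPreds {P F : Type} (M : Set (Clause P F)) : Set (P × ℕ) :=
  { pn | ∃ C ∈ M, ∃ a ∈ C.body, a.hasPF = true ∧ pn = (a.pred, a.args.length) }

/-- The basic shifting transformation `bs`: shift deep body atoms and add the shifted atom
consistency clauses `⊥ ← P(x₁,...,xₙ) ∧ P̄(x₁,...,xₙ)`. -/
def bs {P F : Type} (bar : P → P) (M : Set (Clause P F)) : Set (Clause P F) :=
  bsClause bar '' M ∪
  { D | ∃ pn ∈ shiftedPreds M,
        D = ⟨[], [⟨pn.1, rangeVars pn.2⟩, ⟨bar pn.1, rangeVars pn.2⟩]⟩ }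

/-- The shifting transformation: `sh(M) = bs(pf(M))`. -/
def sh {P F : Type} [DecidableEq P] (eqP : P) (bar : P → P) (M : Set (Clause P F)) :
    Set (Clause P F) :=
  bs bar (pf eqP M)

/-! ### Blocking -/

/-- The head `x ≈ y ∨ x ≉ y` of the blocking clauses. -/
def blockSplitHead {P F : Type} (eqP neqP : P) : List (Atom P F) :=
  [eqAtom eqP (Term.var 0) (Term.var 1), eqAtom neqP (Term.var 0) (Term.var 1)]

/-- The clause `⊥ ← x ≈ y ∧ x ≉ y`. -/
def eqNeqBot {P F : Type} (eqP neqP : P) : Clause P F :=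
  ⟨[], [eqAtom eqP (Term.var 0) (Term.var 1), eqAtom neqP (Term.var 0) (Term.var 1)]⟩

/-- The unrestricted domain blocking transformation `blud`. -/
def blud {P F : Type} (domP eqP neqP : P) (M : Set (Clause P F)) : Set (Clause P F) :=
  M ∪ { ⟨blockSplitHead eqP neqP, [domAtom domP (Term.var 0), domAtom domP (Term.var 1)]⟩,
        eqNeqBot eqP neqP }

/-- The atom `sub(s,t)`. -/
def subAtom {P F : Type} (subP : P) (s t : Term F) : Atom P F := ⟨subP, [s, t]⟩

/-- The axioms describing the subterm relationship: `sub(x,x) ← dom(x)` and, for every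
`n`-ary function symbol `f` of the signature and `1 ≤ i ≤ n`,
`sub(x, f(x₁,...,xₙ)) ← sub(x,xᵢ) ∧ dom(x) ∧ dom(f(x₁,...,xₙ))`. -/
def subClauses {P F : Type} (domP subP : P) (Fs : Set (F × ℕ)) : Set (Clause P F) :=
  { ⟨[subAtom subP (Term.var 0) (Term.var 0)], [domAtom domP (Term.var 0)]⟩ } ∪
  { D | ∃ fn ∈ Fs, ∃ i, i < fn.2 ∧
        D = ⟨[subAtom subP (Term.var fn.2) (Term.app fn.1 (rangeVars fn.2))],
             [subAtom subP (Term.var fn.2) (Term.var i),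
              domAtom domP (Term.var fn.2),
              domAtom domP (Term.app fn.1 (rangeVars fn.2))]⟩ }

/-- The subterm domain blocking transformation `blsd`. -/
def blsd {P F : Type} (σ : Sig P F) (domP eqP neqP subP : P) (M : Set (Clause P F)) :
    Set (Clause P F) :=
  M ∪ subClauses domP subP σ.funcs ∪
  { ⟨blockSplitHead eqP neqP, [subAtom subP (Term.var 0) (Term.var 1)]⟩,
    eqNeqBot eqP neqP }

/-- The subterm predicate blocking transformation `blsp`. -/
def blsp {P F : Type} (σ : Sig P F) (domP eqP neqP subP : P) (M : Set (Clause P F)) :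
    Set (Clause P F) :=
  M ∪ subClauses domP subP σ.funcs ∪
  { D | ∃ p : P, (p, 1) ∈ σ.preds ∧
        D = ⟨blockSplitHead eqP neqP,
             [subAtom subP (Term.var 0) (Term.var 1),
              ⟨p, [Term.var 0]⟩, ⟨p, [Term.var 1]⟩]⟩ } ∪
  { eqNeqBot eqP neqP }

/-- The unrestricted predicate blocking transformation `blup`. -/
def blup {P F : Type} (σ : Sig P F) (domP eqP neqP : P) (M : Set (Clause P F)) :
    Set (Clause P F) :=
  M ∪ { D | ∃ p : P, (p, 1) ∈ σ.preds ∧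
        D = ⟨blockSplitHead eqP neqP, [⟨p, [Term.var 0]⟩, ⟨p, [Term.var 1]⟩]⟩ } ∪
  { eqNeqBot eqP neqP }

/-! ### Combined transformations -/

/-- The base transformations `rr`, `sh∘rr`, `crr`, `sh∘crr`
(composition read left-to-right, so `(sh∘rr)(M) = rr(sh(M))`). -/
inductive BaseTr | rr | shrr | crr | shcrr

/-- The optional blocking transformations. -/
inductive BlockTr | id | blsd | blsp | blud | blup

def applyBase {P F : Type} [DecidableEq P] [DecidableEq F] (σ : Sig P F) (domP : P) (c : F)
    (eqP : P) (bar : P → P) : BaseTr → Set (Clause P F) → Set (Clause P F)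
  | .rr, M => rr σ domP c M
  | .shrr, M => rr σ domP c (sh eqP bar M)
  | .crr, M => crr σ domP c M
  | .shcrr, M => crr σ domP c (sh eqP bar M)

def applyBlock {P F : Type} (σ : Sig P F) (domP eqP neqP subP : P) :
    BlockTr → Set (Clause P F) → Set (Clause P F)
  | .id, M => M
  | .blsd, M => blsd σ domP eqP neqP subP M
  | .blsp, M => blsp σ domP eqP neqP subP M
  | .blud, M => blud domP eqP neqP M
  | .blup, M => blup σ domP eqP neqP M

/-- A combined transformation: a base transformation optionally followed by a blocking
transformation (composition read left-to-right). -/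
def applyTr {P F : Type} [DecidableEq P] [DecidableEq F] (σ : Sig P F) (domP : P) (c : F)
    (eqP neqP subP : P) (bar : P → P) (b : BaseTr) (τ : BlockTr) (M : Set (Clause P F)) :
    Set (Clause P F) :=
  applyBlock σ domP eqP neqP subP τ (applyBase σ domP c eqP bar b M)

/-- The clause `x ≈ x ← dom(x)`. -/
def reflDomClause {P F : Type} (domP eqP : P) : Clause P F :=
  ⟨[eqAtom eqP (Term.var 0) (Term.var 0)], [domAtom domP (Term.var 0)]⟩

end BUMG

namespace BUMG

/-!
Let `I` be a Herbrand model of `rr(M)` and `D` the set of terms `t` with `dom(t) ∈ I`. Then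
`c ∈ D`, and the Step-(4) and Step-(5) clauses put the arguments of every true `σ`-atom into `D`
and close `D` under taking arguments. Map ground terms into `D` bottom-up, replacing every
subterm that leaves `D` by `c`, and let a ground atom hold iff its image holds in `I`.
Given a ground instance of a clause `C ∈ M` whose body holds, compose it with this map to get
an instance `v` into `D`. The Step-(2) clauses show that the body arguments of `C` instantiated
by `v` lie in `D`, where the map is the identity; so the range-restricted `C` fires under `v`,
and the head atom it makes true has its arguments in `D` by Step (4), hence holds as well.
-/

namespace Term

variable {F : Type}

@[elab_as_elim]
theorem induction {motive : Term F → Prop} (var : ∀ n, motive (var n))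
    (app : ∀ f ts, (∀ t ∈ ts, motive t) → motive (app f ts)) : ∀ t, motive t
  | .var n => var n
  | .app f ts => app f ts fun t _ => induction var app t
decreasing_by simp_wf; have := List.sizeOf_lt_of_mem ‹t ∈ ts›; omega

@[simp]
theorem subst_var (g : ℕ → Term F) (n : ℕ) : (var n).subst g = g n := by
  rw [subst]

@[simp]
theorem subst_app (g : ℕ → Term F) (f : F) (ts : List (Term F)) :
    (app f ts).subst g = app f (ts.map (subst g)) := by
  rw [subst, List.attach_map_val]

@[simp]
theorem vars_var (n : ℕ) : (var n : Term F).vars = [n] := by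
  rw [vars]

@[simp]
theorem vars_app (f : F) (ts : List (Term F)) : (app f ts).vars = ts.flatMap vars := by
  rw [vars, List.flatMap, List.flatMap, List.attach_map_val]

@[simp]
theorem funcs_app (f : F) (ts : List (Term F)) :
    (app f ts).funcs = (f, ts.length) :: ts.flatMap funcs := by
  rw [funcs, List.flatMap, List.flatMap, List.attach_map_val]

theorem isGround_app {f : F} {ts : List (Term F)} :
    (app f ts).IsGround ↔ ∀ t ∈ ts, t.IsGround := by
  simp [IsGround]

theorem isGround_subst {g : ℕ → Term F} (hg : GroundSubst g) (t : Term F) :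
    (t.subst g).IsGround := by
  induction t using Term.induction with
  | var n => simpa using hg n
  | app f ts ih => simpa [isGround_app] using ih

theorem subst_congr {g h : ℕ → Term F} {t : Term F} (hgh : ∀ x ∈ t.vars, g x = h x) :
    t.subst g = t.subst h := by
  induction t using Term.induction with
  | var n => simpa using hgh
  | app f ts ih =>
    simp only [subst_app, app.injEq, true_and]
    exact List.map_congr_left fun u hu =>
      ih u hu fun x hx => hgh x (by simpa using ⟨u, hu, hx⟩)

theorem groundSubst_getD {ts : List (Term F)} {d : Term F} (hts : ∀ t ∈ ts, t.IsGround)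
    (hd : d.IsGround) : GroundSubst fun n => ts.getD n d := by
  intro n
  show (ts.getD n d).IsGround
  by_cases hn : n < ts.length
  · rw [List.getD_eq_getElem _ _ hn]; exact hts _ (List.getElem_mem hn)
  · rw [List.getD_eq_default _ _ (not_lt.mp hn)]; exact hd

theorem map_subst_rangeVars_getD (ts : List (Term F)) (d : Term F) :
    (rangeVars ts.length).map (subst fun n => ts.getD n d) = ts := by
  refine List.ext_getElem (by simp [rangeVars]) fun i _ hi => ?_
  simp [rangeVars, List.getElem?_eq_getElem hi]

open Classical in
noncomputable def substClamp (D : Set (Term F)) (d : Term F) (v : ℕ → Term F) :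
    Term F → Term F
  | var n => v n
  | app f ts =>
    if app f (ts.attach.map fun t => substClamp D d v t.1) ∈ D
    then app f (ts.attach.map fun t => substClamp D d v t.1) else d
decreasing_by all_goals (simp_wf; have := List.sizeOf_lt_of_mem t.2; omega)

section substClamp

variable {D : Set (Term F)} {d : Term F}

@[simp]
theorem substClamp_var (v : ℕ → Term F) (n : ℕ) : substClamp D d v (var n) = v n := by
  rw [substClamp]

open Classical in
theorem substClamp_app (v : ℕ → Term F) (f : F) (ts : List (Term F)) :
    substClamp D d v (app f ts) =
      if app f (ts.map (substClamp D d v)) ∈ D then app f (ts.map (substClamp D d v)) else d := by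
  rw [substClamp, List.attach_map_val]

theorem substClamp_of_isVar {v : ℕ → Term F} {t : Term F} (ht : t.isVar) :
    substClamp D d v t = t.subst v := by
  cases t with
  | var n => simp
  | app => simp [isVar] at ht

theorem substClamp_mem {v : ℕ → Term F} (hd : d ∈ D) (hv : ∀ n, v n ∈ D) (t : Term F) :
    substClamp D d v t ∈ D := by
  cases t with
  | var n => simpa using hv n
  | app f ts => rw [substClamp_app]; split_ifs <;> assumption

theorem substClamp_subst (w g : ℕ → Term F) (t : Term F) :
    substClamp D d w (t.subst g) = substClamp D d (fun n => substClamp D d w (g n)) t := by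
  induction t using Term.induction with
  | var n => simp
  | app f ts ih =>
    have hargs : (ts.map (subst g)).map (substClamp D d w) =
        ts.map (substClamp D d fun n => substClamp D d w (g n)) := by
      rw [List.map_map]; exact List.map_congr_left ih
    rw [subst_app, substClamp_app, substClamp_app, hargs]

theorem substClamp_eq_subst {Fs : Set (F × ℕ)} {v : ℕ → Term F}
    (hD : ∀ f ts, (f, ts.length) ∈ Fs → app f ts ∈ D → ∀ t ∈ ts, t ∈ D)
    {t : Term F} (ht : ∀ fn ∈ t.funcs, fn ∈ Fs) (htD : t.subst v ∈ D) :
    substClamp D d v t = t.subst v := by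
  induction t using Term.induction with
  | var n => simp
  | app f ts ih =>
    rw [subst_app] at htD ⊢
    have hargs : ts.map (substClamp D d v) = ts.map (subst v) :=
      List.map_congr_left fun u hu =>
        ih u hu (fun fn hfn => ht fn (by simpa using Or.inr ⟨u, hu, hfn⟩))
          (hD f _ (by simpa using ht _ (by simp)) htD _ (List.mem_map_of_mem hu))
    rw [substClamp_app, hargs, if_pos htD]

end substClamp

end Term

section

variable {P F : Type}

theorem Atom.isGround_iff {a : Atom P F} : a.IsGround ↔ ∀ t ∈ a.args, t.IsGround := by
  simp [Atom.IsGround, Atom.vars, Term.IsGround]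

theorem Atom.isGround_subst {g : ℕ → Term F} (hg : GroundSubst g) (a : Atom P F) :
    (a.subst g).IsGround := by
  simpa [Atom.isGround_iff, Atom.subst] using fun t _ => Term.isGround_subst hg t

theorem isGround_cTerm (c : F) : (cTerm c).IsGround := by
  simp [cTerm, Term.isGround_app]

/-- Instantiates the fresh variables `base + i` of `abstrArgs base ts` by `us[i]`,
and the remaining variables by `v`. -/
def abstrInst (base : ℕ) (v : ℕ → Term F) (us : List (Term F)) : ℕ → Term F :=
  fun x => if x < base then v x else us.getD (x - base) (v x)

theorem abstrInst_of_lt {base x : ℕ} (v : ℕ → Term F) (us : List (Term F)) (hx : x < base) :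
    abstrInst base v us x = v x := if_pos hx

theorem groundSubst_abstrInst {base : ℕ} {v : ℕ → Term F} {us : List (Term F)}
    (hv : GroundSubst v) (hus : ∀ u ∈ us, u.IsGround) : GroundSubst (abstrInst base v us) := by
  intro x
  unfold abstrInst
  split_ifs
  · exact hv x
  · exact Term.groundSubst_getD hus (hv x) (x - base)

theorem map_subst_abstrArgs {base : ℕ} {ts us : List (Term F)} {v : ℕ → Term F}
    (hlen : us.length = ts.length) (hvars : ∀ t ∈ ts, ∀ x ∈ t.vars, x < base)
    (hus : ∀ i (hi : i < ts.length), ts[i].isVar → us[i] = ts[i].subst v) :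
    (abstrArgs base ts).map (Term.subst (abstrInst base v us)) = us := by
  refine List.ext_getElem (by simp [abstrArgs, hlen]) fun i _ hi => ?_
  have hi' : i < ts.length := hlen ▸ hi
  simp only [abstrArgs, List.getElem_map, List.getElem_mapIdx]
  split_ifs with hvar
  · rw [hus i hi' hvar]
    exact Term.subst_congr fun x hx =>
      abstrInst_of_lt v us (hvars _ (List.getElem_mem hi') x hx)
  · rw [Term.subst_var, abstrInst, if_neg (by omega), Nat.add_sub_cancel_left,
      List.getD_eq_getElem _ _ hi]

theorem exists_head_mem_of_satClause_rangeRestrictClause {I : Set (Atom P F)} {domP : P}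
    {C : Clause P F} {g : ℕ → Term F} (hC : satClause I (rangeRestrictClause domP C))
    (hg : GroundSubst g) (hdom : ∀ x ∈ C.headVars, domAtom domP (g x) ∈ I)
    (hbody : ∀ a ∈ C.body, a.subst g ∈ I) : ∃ a ∈ C.heads, a.subst g ∈ I := by
  refine hC g hg fun a ha => ?_
  rcases List.mem_append.mp ha with ha | ha
  · exact hbody a ha
  · obtain ⟨x, hx, rfl⟩ := List.mem_map.mp ha
    simpa [domAtom, Atom.subst] using hdom x (List.mem_filter.mp (List.mem_dedup.mp hx)).1

theorem head_subst_mem_of_satClause {I : Set (Atom P F)} {h b : Atom P F} {g : ℕ → Term F}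
    (hC : satClause I ⟨[h], [b]⟩) (hg : GroundSubst g) (hb : b.subst g ∈ I) : h.subst g ∈ I := by
  simpa using hC g hg (by simpa using hb)

theorem WFSet.funcs_mem {σ : Sig P F} {M : Set (Clause P F)} (hwf : WFSet σ M)
    {C : Clause P F} (hC : C ∈ M) {a : Atom P F} (ha : a ∈ C.atoms) {t : Term F}
    (ht : t ∈ a.args) : ∀ fn ∈ t.funcs, fn ∈ σ.funcs := fun fn hfn =>
  (hwf C hC).2 fn (List.mem_flatMap.mpr ⟨a, ha, List.mem_flatMap.mpr ⟨t, ht, hfn⟩⟩)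

theorem WFSet.pred_mem {σ : Sig P F} {M : Set (Clause P F)} (hwf : WFSet σ M)
    {C : Clause P F} (hC : C ∈ M) {a : Atom P F} (ha : a ∈ C.atoms) :
    (a.pred, a.args.length) ∈ σ.preds :=
  (hwf C hC).1 _ (List.mem_map_of_mem ha)

theorem Clause.lt_maxVar_succ {C : Clause P F} {x : ℕ} (hx : x ∈ C.vars) : x < C.maxVar + 1 :=
  Nat.lt_succ_of_le (List.le_max_of_le' 0 hx le_rfl)

def domOf (domP : P) (I : Set (Atom P F)) : Set (Term F) := {t | domAtom domP t ∈ I}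

theorem mem_domOf {domP : P} {I : Set (Atom P F)} {t : Term F} :
    t ∈ domOf domP I ↔ domAtom domP t ∈ I := Iff.rfl

theorem isGround_of_mem_domOf {domP : P} {I : Set (Atom P F)} (hIg : ∀ a ∈ I, a.IsGround)
    {t : Term F} (ht : t ∈ domOf domP I) : t.IsGround := by
  simpa [Atom.isGround_iff, domAtom] using hIg _ ht

def clampedModel (D : Set (Term F)) (d : Term F) (I : Set (Atom P F)) : Set (Atom P F) :=
  {a | a.IsGround ∧ ⟨a.pred, a.args.map (Term.substClamp D d fun _ => d)⟩ ∈ I}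

section rr

variable [DecidableEq P] [DecidableEq F] {σ : Sig P F} {domP : P} {c : F}
  {M : Set (Clause P F)} {I : Set (Atom P F)}

theorem cTerm_mem_domOf (hI : ∀ C ∈ rr σ domP c M, satClause I C) :
    cTerm c ∈ domOf domP I := by
  have hmem : rangeRestrictClause domP (domcClause domP c) ∈ rr σ domP c M :=
    Or.inl (Or.inl ⟨_, Or.inl (Or.inr rfl), rfl⟩)
  obtain ⟨a, ha, haI⟩ := exists_head_mem_of_satClause_rangeRestrictClause (hI _ hmem)
    (g := fun _ => cTerm c) (fun _ => isGround_cTerm c)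
    (by simp [domcClause, Clause.headVars, Atom.vars, domAtom, cTerm])
    (by simp [domcClause])
  simp only [domcClause, List.mem_singleton] at ha
  subst ha
  simpa [domOf, domAtom, Atom.subst, cTerm] using haI

theorem mem_domOf_of_app_mem (hI : ∀ C ∈ rr σ domP c M, satClause I C)
    (hIg : ∀ a ∈ I, a.IsGround) {f : F} {ts : List (Term F)}
    (hf : (f, ts.length) ∈ σ.funcs) (hD : Term.app f ts ∈ domOf domP I) {t : Term F}
    (ht : t ∈ ts) : t ∈ domOf domP I := by
  obtain ⟨i, hi, rfl⟩ := List.getElem_of_mem ht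
  have hmem : (⟨[domAtom domP (Term.var i)], [domAtom domP (Term.app f (rangeVars ts.length))]⟩ :
      Clause P F) ∈ rr σ domP c M := Or.inr ⟨_, hf, i, hi, rfl⟩
  have hg := Term.groundSubst_getD
    (Term.isGround_app.mp (isGround_of_mem_domOf hIg hD)) (isGround_cTerm c)
  have := head_subst_mem_of_satClause (hI _ hmem) hg (by
    simpa only [mem_domOf, domAtom, Atom.subst, List.map_cons, List.map_nil, Term.subst_app,
      Term.map_subst_rangeVars_getD] using hD)
  simpa only [mem_domOf, domAtom, Atom.subst, List.map_cons, List.map_nil, Term.subst_var,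
    List.getD_eq_getElem _ _ hi] using this

theorem mem_domOf_of_mem_args (hI : ∀ C ∈ rr σ domP c M, satClause I C)
    (hIg : ∀ a ∈ I, a.IsGround) {a : Atom P F} (hp : (a.pred, a.args.length) ∈ σ.preds)
    (ha : a ∈ I) {t : Term F} (ht : t ∈ a.args) : t ∈ domOf domP I := by
  obtain ⟨i, hi, rfl⟩ := List.getElem_of_mem ht
  have hmem : (⟨[domAtom domP (Term.var i)], [⟨a.pred, rangeVars a.args.length⟩]⟩ :
      Clause P F) ∈ rr σ domP c M := Or.inl (Or.inr ⟨_, hp, i, hi, rfl⟩)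
  have hg := Term.groundSubst_getD (Atom.isGround_iff.mp (hIg a ha)) (isGround_cTerm c)
  have := head_subst_mem_of_satClause (hI _ hmem) hg (by
    simpa only [Atom.subst, Term.map_subst_rangeVars_getD] using ha)
  simpa only [mem_domOf, domAtom, Atom.subst, List.map_cons, List.map_nil, Term.subst_var,
    List.getD_eq_getElem _ _ hi] using this

theorem subst_mem_domOf_of_mem_body (hI : ∀ C ∈ rr σ domP c M, satClause I C)
    (hIg : ∀ a ∈ I, a.IsGround) {C : Clause P F} (hC : C ∈ M) {a : Atom P F} (ha : a ∈ C.body)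
    {v : ℕ → Term F} (hv : ∀ x, v x ∈ domOf domP I) {us : List (Term F)}
    (hlen : us.length = a.args.length)
    (hus : ∀ i (hi : i < a.args.length), a.args[i].isVar → us[i] = a.args[i].subst v)
    (hatom : ⟨a.pred, us⟩ ∈ I) {t : Term F} (ht : t ∈ a.args) : t.subst v ∈ domOf domP I := by
  cases hvar : t.isVar
  case true =>
    cases t with
    | var x => simpa using hv x
    | app => simp [Term.isVar] at hvar
  obtain ⟨i, hi, rfl⟩ := List.getElem_of_mem ht
  set base := C.maxVar + 1
  have hvars : ∀ u ∈ a.args, ∀ x ∈ u.vars, x < base := fun u hu x hx =>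
    Clause.lt_maxVar_succ <|
      List.mem_flatMap.mpr ⟨a, List.mem_append_right _ ha, List.mem_flatMap.mpr ⟨u, hu, hx⟩⟩
  have hg : GroundSubst (abstrInst base v us) :=
    groundSubst_abstrInst (fun x => isGround_of_mem_domOf hIg (hv x))
      (Atom.isGround_iff.mp (hIg _ hatom))
  have hmem : rangeRestrictClause domP
      ⟨[domAtom domP (a.args.get ⟨i, hi⟩)], [⟨a.pred, abstrArgs base a.args⟩]⟩ ∈ rr σ domP c M :=
    Or.inl (Or.inl ⟨_, Or.inr ⟨C, hC, a, ha, ⟨i, hi⟩, hvar, rfl⟩, rfl⟩)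
  have hlow : ∀ x ∈ a.args[i].vars, abstrInst base v us x = v x := fun x hx =>
    abstrInst_of_lt v us (hvars _ (List.getElem_mem hi) x hx)
  obtain ⟨b, hb, hbI⟩ := exists_head_mem_of_satClause_rangeRestrictClause (hI _ hmem) hg
    (fun x hx => by
      rw [hlow x (by simpa [Clause.headVars, Atom.vars, domAtom] using hx)]
      exact hv x)
    (by simpa [Atom.subst, map_subst_abstrArgs hlen hvars hus] using hatom)
  simp only [List.mem_singleton] at hb
  subst hb
  simpa only [mem_domOf, domAtom, Atom.subst, List.map_cons, List.map_nil, List.get_eq_getElem,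
    Term.subst_congr hlow] using hbI

theorem satClause_clampedModel (hI : ∀ C ∈ rr σ domP c M, satClause I C)
    (hIg : ∀ a ∈ I, a.IsGround) (hwf : WFSet σ M) {C : Clause P F} (hC : C ∈ M) :
    satClause (clampedModel (domOf domP I) (cTerm c) I) C := by
  intro g hg hbody
  set D := domOf domP I
  set π := Term.substClamp D (cTerm c) fun _ => cTerm c
  have hd : cTerm c ∈ D := cTerm_mem_domOf hI
  set v : ℕ → Term F := fun x => π (g x)
  have hvD : ∀ x, v x ∈ D := fun x => Term.substClamp_mem hd (fun _ => hd) _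
  have hπ (a : Atom P F) :
      (a.subst g).args.map π = a.args.map (Term.substClamp D (cTerm c) v) := by
    simp only [Atom.subst, List.map_map]
    exact List.map_congr_left fun t _ => Term.substClamp_subst _ _ t
  have hclamp : ∀ a ∈ C.atoms, (∀ t ∈ a.args, t.subst v ∈ D) →
      a.args.map (Term.substClamp D (cTerm c) v) = a.args.map (Term.subst v) :=
    fun a ha haD => List.map_congr_left fun t ht =>
      Term.substClamp_eq_subst (fun _ _ hf hD _ ht => mem_domOf_of_app_mem hI hIg hf hD ht)
        (hwf.funcs_mem hC ha ht) (haD t ht)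
  have hbodyI : ∀ a ∈ C.body, a.subst v ∈ I := by
    intro a ha
    have haI : ⟨a.pred, a.args.map (Term.substClamp D (cTerm c) v)⟩ ∈ I := hπ a ▸ (hbody a ha).2
    rwa [hclamp a (List.mem_append_right _ ha) fun t ht =>
      subst_mem_domOf_of_mem_body hI hIg hC ha hvD (List.length_map _)
        (fun i _ hvar => by simpa using Term.substClamp_of_isVar hvar) haI ht] at haI
  have hCrr : rangeRestrictClause domP C ∈ rr σ domP c M :=
    Or.inl (Or.inl ⟨C, Or.inl (Or.inl hC), rfl⟩)
  obtain ⟨b, hb, hbI⟩ := exists_head_mem_of_satClause_rangeRestrictClause (hI _ hCrr)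
    (fun x => isGround_of_mem_domOf hIg (hvD x)) (fun x _ => hvD x) hbodyI
  have hbC : b ∈ C.atoms := List.mem_append_left C.body hb
  refine ⟨b, hb, Atom.isGround_subst hg b, ?_⟩
  change ⟨b.pred, (b.subst g).args.map π⟩ ∈ I
  rwa [hπ, hclamp b hbC fun t ht => mem_domOf_of_mem_args hI hIg
    (by simpa [Atom.subst] using hwf.pred_mem hC hbC) hbI (List.mem_map_of_mem ht)]

end rr

end

theorem rr_completeness_general {P F : Type} [DecidableEq P] [DecidableEq F]
    (σ : Sig P F) (domP : P) (c : F) (M : Set (Clause P F))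
    (hwf : WFSet σ M)
    (hsat : Satisfiable (rr σ domP c M)) :
    Satisfiable M := by
  obtain ⟨I, hIg, hI⟩ := hsat
  exact ⟨_, fun _ ha => ha.1, fun C hC => satClause_clampedModel hI hIg hwf hC⟩

/-- **Completeness of range-restriction** (Proposition 1): for every clause set `M`,
if `rr(M)` is satisfiable then `M` is satisfiable. -/
theorem rr_completeness {P F : Type} [DecidableEq P] [DecidableEq F]
    (σ : Sig P F) (domP : P) (c : F) (M : Set (Clause P F))
    (hfin : M.Finite) (hwf : WFSet σ M)
    (hdomFresh : ∀ n, (domP, n) ∉ σ.preds)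
    (hsat : Satisfiable (rr σ domP c M)) :
    Satisfiable M :=
  rr_completeness_general σ domP c M hwf hsat

end BUMG
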